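/- arXiv:2011.08015 — 7 statements merged into one kernel-verified Lean document; each statement's English description precedes it below -/
import Mathlib

section
/- For any integers a, b and positive integer n with a ≥ b and a + b ≥ n - 1, the generalized binomial coefficients satisfy C(a+1, n) + C(b-1, n) ≥ C(a, n) + C(b, n), where C(x, n) = x(x-1)⋯(x-n+1)/n! is the generalized binomial coefficient defined for any integer x. -/
/-!
By Pascal's rule the inequality is equivalent to `C(b - 1, n - 1) ≤ C(a, n - 1)`. For integers
`y ≤ x` with `k - 1 ≤ x + y` one has `C(y, k) ≤ C(x, k)`: for `y ≥ 0` this is monotonicity of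
`Nat.choose`, and for `y < 0` the reflection `C(y, k) = (-1)^k C(k - 1 - y, k)` gives
`|C(y, k)| = C(k - 1 - y, k) ≤ C(x, k)`, as `0 ≤ k - 1 - y ≤ x`.
-/

open Finset

/-- Generalized binomial coefficient `C(a, k) = a(a-1)⋯(a-k+1)/k!`. -/
def gbc (a : ℚ) (k : ℕ) : ℚ :=
  (∏ i ∈ Finset.range k, (a - i)) / (Nat.factorial k)

theorem gbc_eq_choose (a : ℚ) (k : ℕ) : gbc a k = Ring.choose a k := by
  rw [gbc, Ring.choose_eq_smul, ← Polynomial.aeval_eq_smeval, Polynomial.aeval_def,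
    Polynomial.eval₂_eq_eval_map, descPochhammer_map, descPochhammer_eval_eq_prod_range,
    smul_eq_mul, div_eq_inv_mul]

theorem gbc_intCast (x : ℤ) (k : ℕ) : gbc x k = Ring.choose x k := by
  rw [gbc_eq_choose]
  exact (Ring.map_choose (Int.castRingHom ℚ) x k).symm

theorem Int.abs_choose_of_lt {y : ℤ} {k : ℕ} (hy : y < k) :
    |Ring.choose y k| = Ring.choose (k - 1 - y) k := by
  have hneg := Ring.choose_neg (-y) k
  rw [neg_neg, Units.smul_def, smul_eq_mul, show -y + k - 1 = k - 1 - y by ring] at hneg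
  rw [hneg, abs_mul, Int.abs_negOnePow, one_mul]
  lift (k : ℤ) - 1 - y to ℕ using by omega with m
  rw [Ring.choose_natCast, Nat.abs_cast]

theorem Int.choose_le_choose_of_sub_one_le_add {x y : ℤ} (k : ℕ) (hyx : y ≤ x)
    (hxy : (k : ℤ) - 1 ≤ x + y) : Ring.choose y k ≤ Ring.choose x k := by
  lift x to ℕ using by omega
  rcases le_or_gt 0 y with hy | hy
  · lift y to ℕ using hy
    rw [Ring.choose_natCast, Ring.choose_natCast]
    exact_mod_cast Nat.choose_le_choose k (by exact_mod_cast hyx)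
  · calc Ring.choose y k ≤ |Ring.choose y k| := le_abs_self _
      _ = Ring.choose ((k : ℤ) - 1 - y) k := Int.abs_choose_of_lt (by omega)
      _ ≤ Ring.choose (x : ℤ) k := by
        lift (k : ℤ) - 1 - y to ℕ using by omega with m hm
        rw [Ring.choose_natCast, Ring.choose_natCast]
        exact_mod_cast Nat.choose_le_choose k (by omega)

theorem gbc_ineq_general (a b : ℤ) (n : ℕ) (hba : b ≤ a) (hsum : (n : ℤ) - 1 ≤ a + b) :
    gbc (a : ℚ) n + gbc (b : ℚ) n ≤ gbc ((a : ℚ) + 1) n + gbc ((b : ℚ) - 1) n := by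
  have ha : (a : ℚ) + 1 = ((a + 1 : ℤ) : ℚ) := by push_cast; rfl
  have hb : (b : ℚ) - 1 = ((b - 1 : ℤ) : ℚ) := by push_cast; rfl
  simp only [ha, hb, gbc_intCast]
  norm_cast
  cases n with
  | zero => simp
  | succ m =>
    have pascal_a := Ring.choose_succ_succ a m
    have pascal_b := Ring.choose_succ_succ (b - 1) m
    rw [sub_add_cancel] at pascal_b
    have := Int.choose_le_choose_of_sub_one_le_add m (x := a) (y := b - 1) (by omega) (by omega)
    linarith

theorem gbc_ineq (a b : ℤ) (n : ℕ) (hn : 0 < n) (hba : b ≤ a) (hsum : (n : ℤ) - 1 ≤ a + b) :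
    gbc (a : ℚ) n + gbc (b : ℚ) n ≤ gbc ((a : ℚ) + 1) n + gbc ((b : ℚ) - 1) n :=
  gbc_ineq_general a b n hba hsum
end

section
/- For any integers a, b and positive odd integer n with a ≥ b and a + b = n - 1, the generalized binomial coefficients satisfy C(a+1, n) + C(b-1, n) = C(a, n) + C(b, n). -/
/-!
Under `x ↦ n - 1 - x` the falling factorial `x (x - 1) ⋯ (x - n + 1)` picks up the sign `(-1) ^ n`,
so for odd `n` we get `C(x, n) + C(n - 1 - x, n) = 0`. Both sides of the claimed identity are sums
of such a pair, `(a + 1, b - 1)` and `(a, b)`, hence both vanish.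
-/

open Finset

theorem descPochhammer_eval_reflect {R : Type*} [CommRing R] (n : ℕ) (r : R) :
    (descPochhammer R n).eval (n - 1 - r) = (-1) ^ n * (descPochhammer R n).eval r := by
  rw [descPochhammer_eval_eq_ascPochhammer, ← ascPochhammer_eval_neg_eq_descPochhammer]
  congr 1
  ring

theorem gbc_eq_descPochhammer_eval (x : ℚ) (n : ℕ) :
    gbc x n = (descPochhammer ℚ n).eval x / n.factorial := by
  rw [gbc, descPochhammer_eval_eq_prod_range]

theorem gbc_add_gbc_reflect_of_odd {n : ℕ} (hn : Odd n) (x : ℚ) :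
    gbc x n + gbc (n - 1 - x) n = 0 := by
  rw [gbc_eq_descPochhammer_eval, gbc_eq_descPochhammer_eval, descPochhammer_eval_reflect,
    hn.neg_one_pow]
  ring

theorem gbc_eq_of_odd_general (a b : ℤ) (n : ℕ) (hodd : Odd n)
    (hsum : a + b = (n : ℤ) - 1) :
    gbc ((a : ℚ) + 1) n + gbc ((b : ℚ) - 1) n = gbc (a : ℚ) n + gbc (b : ℚ) n := by
  have hsum' : (a : ℚ) + b = n - 1 := by exact_mod_cast hsum
  rw [show (b : ℚ) - 1 = n - 1 - (a + 1) by linarith, show (b : ℚ) = n - 1 - a by linarith,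
    gbc_add_gbc_reflect_of_odd hodd, gbc_add_gbc_reflect_of_odd hodd]

theorem gbc_eq_of_odd (a b : ℤ) (n : ℕ) (hn : 0 < n) (hodd : Odd n) (hba : b ≤ a)
    (hsum : a + b = (n : ℤ) - 1) :
    gbc ((a : ℚ) + 1) n + gbc ((b : ℚ) - 1) n = gbc (a : ℚ) n + gbc (b : ℚ) n :=
  gbc_eq_of_odd_general a b n hodd hsum
end

section
/- Let Td(n; d_1,…,d_r) := Σ_{j=0}^{r} (-1)^{n+r+j} Σ_{1 ≤ k_1 < ⋯ < k_j ≤ r} C(-1 + d_{k_1} + ⋯ + d_{k_j}, n+r). If c_1 := n + r + 1 - Σ_{i=1}^{r} d_i > 0 and all d_i > 1, then Td(n; d_1,…,d_r) = 1. -/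
/-! For every nonempty `S`, the number `-1 + ∑_{i ∈ S} dᵢ` is an integer in `[0, n + r)`, because
`dᵢ ≥ 1` and `c₁ > 0`; so it is one of the roots `0, 1, …, n + r - 1` of `C(·, n + r)` and the
term of `S` vanishes. Only `S = ∅` survives, contributing `(-1)^(n+r) C(-1, n + r) = 1`. -/

open Finset

/-- Todd genus of the complete intersection `X_n(d₁,…,d_r)` via the combinatorial formula. -/
def Td (n r : ℕ) (d : Fin r → ℤ) : ℚ :=
  ∑ S ∈ (Finset.univ : Finset (Fin r)).powerset,
    (-1) ^ (n + r + S.card) * gbc (-1 + ∑ i ∈ S, (d i : ℚ)) (n + r)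

theorem gbc_neg_one (m : ℕ) : gbc (-1) m = (-1) ^ m := by
  have hprod : ∏ i ∈ range m, ((-1 : ℚ) - i) = (-1) ^ m * m.factorial := by
    calc ∏ i ∈ range m, ((-1 : ℚ) - i) = ∏ i ∈ range m, -((i : ℚ) + 1) :=
          prod_congr rfl fun i _ => by ring
      _ = (-1) ^ m * m.factorial := by
          rw [prod_neg, card_range, ← prod_range_add_one_eq_factorial]
          push_cast
          rfl
  rw [gbc, hprod, mul_div_cancel_right₀ _ (by positivity)]

theorem gbc_natCast_eq_zero {N m : ℕ} (h : N < m) : gbc N m = 0 := by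
  rw [gbc, prod_eq_zero (mem_range.2 h) (sub_self _), zero_div]

theorem gbc_intCast_eq_zero {a : ℤ} {m : ℕ} (h₀ : 0 ≤ a) (h : a < m) : gbc a m = 0 := by
  lift a to ℕ using h₀
  exact_mod_cast gbc_natCast_eq_zero (by exact_mod_cast h)

theorem gbc_neg_one_add_sum_eq_zero {ι : Type*} {s t : Finset ι} {d : ι → ℤ} {m : ℕ}
    (hd : ∀ i ∈ s, 0 < d i) (hts : t ⊆ s) (ht : t.Nonempty) (hm : ∑ i ∈ s, d i ≤ m) :
    gbc (-1 + ∑ i ∈ t, (d i : ℚ)) m = 0 := by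
  obtain ⟨j, hj⟩ := ht
  have hpos : 0 < ∑ i ∈ t, d i :=
    sum_pos' (fun i hi => (hd i (hts hi)).le) ⟨j, hj, hd j (hts hj)⟩
  have hle : ∑ i ∈ t, d i ≤ ∑ i ∈ s, d i :=
    sum_le_sum_of_subset_of_nonneg hts fun i hi _ => (hd i hi).le
  have hcast : -1 + ∑ i ∈ t, (d i : ℚ) = ((-1 + ∑ i ∈ t, d i : ℤ) : ℚ) := by push_cast; rfl
  rw [hcast]
  exact gbc_intCast_eq_zero (by omega) (by omega)

theorem todd_pos_c1_general (n r : ℕ) (d : Fin r → ℤ) (hd : ∀ i, 1 < d i)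
    (hc : 0 < (n : ℤ) + r + 1 - ∑ i, d i) :
    Td n r d = 1 := by
  have hsum : ∑ i, d i ≤ ((n + r : ℕ) : ℤ) := by push_cast; omega
  rw [Td, sum_eq_single_of_mem ∅ (empty_mem_powerset _)]
  · rw [card_empty, sum_empty, add_zero, add_zero, gbc_neg_one, ← mul_pow]
    norm_num
  · intro S hS hne
    rw [gbc_neg_one_add_sum_eq_zero (fun i _ => zero_lt_one.trans (hd i)) (mem_powerset.1 hS)
      (nonempty_iff_ne_empty.2 hne) hsum, mul_zero]

theorem todd_pos_c1 (n r : ℕ) (hr : 1 ≤ r) (d : Fin r → ℤ) (hd : ∀ i, 1 < d i)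
    (hc : 0 < (n : ℤ) + r + 1 - ∑ i, d i) :
    Td n r d = 1 :=
  todd_pos_c1_general n r d hd hc
end

section
/- Let Td(n; d_1,…,d_r) := Σ_{j=0}^{r} (-1)^{n+r+j} Σ_{1 ≤ k_1 < ⋯ < k_j ≤ r} C(-1 + d_{k_1} + ⋯ + d_{k_j}, n+r). If c_1 := n + r + 1 - Σ_{i=1}^{r} d_i = 0 and all d_i > 1, then Td(n; d_1,…,d_r) = 1 + (-1)^n. -/
open Finset

/-!
With `N_S = ∑_{i ∈ S} d_i` and `m = n + r`, the identity
`(-1)^m C(N - 1, m) = ∑_{k ≤ m} (-1)^k C(N, k)` turns `Td` into the alternating sum of the first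
`m + 1` coefficients of `A = ∏_i (1 - (1 + X)^{d_i})`. Because `c₁ = 0`, the polynomial `A` has
degree exactly `m + 1`, with leading coefficient `(-1)^r`, and `A(-1) = 1`. So the sum is `A(-1)`
minus the top term, that is `1 - (-1)^(m + 1 + r) = 1 + (-1)^n`.
-/

theorem Ring.alternating_sum_range_choose_succ {R : Type*} [CommRing R] [BinomialRing R]
    (r : R) (m : ℕ) :
    ∑ k ∈ range (m + 1), (-1) ^ k * Ring.choose (r + 1) k = (-1) ^ m * Ring.choose r m := by
  induction m with
  | zero => simp
  | succ m ih =>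
    rw [sum_range_succ, ih, Ring.choose_succ_succ]
    ring

namespace Polynomial

variable {R : Type*} [CommRing R]

theorem coeff_prod_one_sub_X_add_one_pow {ι : Type*} [DecidableEq ι] (s : Finset ι) (e : ι → ℕ)
    (k : ℕ) :
    (∏ i ∈ s, (1 - (X + 1) ^ e i) : R[X]).coeff k =
      ∑ t ∈ s.powerset, (-1) ^ #t * ((∑ i ∈ t, e i).choose k : R) := by
  simp only [prod_sub, prod_const_one, mul_one, prod_pow_eq_pow_sum, finsetSum_coeff]
  refine sum_congr rfl fun t _ => ?_
  rw [show ((-1 : R[X]) ^ #t) = C ((-1) ^ #t) by simp, coeff_C_mul, coeff_X_add_one_pow]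

theorem sum_range_natDegree_neg_one_pow_mul_coeff (p : R[X]) :
    ∑ k ∈ range p.natDegree, (-1) ^ k * p.coeff k =
      p.eval (-1) - (-1) ^ p.natDegree * p.leadingCoeff := by
  rw [eval_eq_sum_range, sum_range_succ, leadingCoeff]
  simp only [mul_comm]
  ring

theorem natDegree_one_sub_X_add_one_pow [Nontrivial R] {e : ℕ} (he : e ≠ 0) :
    (1 - (X + 1) ^ e : R[X]).natDegree = e := by
  compute_degree!
  simp [he]

theorem leadingCoeff_one_sub_X_add_one_pow [Nontrivial R] {e : ℕ} (he : e ≠ 0) :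
    (1 - (X + 1) ^ e : R[X]).leadingCoeff = -1 := by
  rw [leadingCoeff, natDegree_one_sub_X_add_one_pow he]
  simp [coeff_one, he, coeff_X_add_one_pow]

variable {ι : Type*} {s : Finset ι} {e : ι → ℕ}

theorem eval_neg_one_prod_one_sub_X_add_one_pow (he : ∀ i ∈ s, e i ≠ 0) :
    (∏ i ∈ s, (1 - (X + 1) ^ e i) : R[X]).eval (-1) = 1 := by
  rw [eval_prod]
  exact prod_eq_one fun i hi => by simp [he i hi]

variable [IsDomain R]

theorem natDegree_prod_one_sub_X_add_one_pow (he : ∀ i ∈ s, e i ≠ 0) :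
    (∏ i ∈ s, (1 - (X + 1) ^ e i) : R[X]).natDegree = ∑ i ∈ s, e i := by
  rw [natDegree_prod _ _ fun i hi => leadingCoeff_ne_zero.mp ?_]
  · exact sum_congr rfl fun i hi => natDegree_one_sub_X_add_one_pow (he i hi)
  · simp [leadingCoeff_one_sub_X_add_one_pow (he i hi)]

theorem leadingCoeff_prod_one_sub_X_add_one_pow (he : ∀ i ∈ s, e i ≠ 0) :
    (∏ i ∈ s, (1 - (X + 1) ^ e i) : R[X]).leadingCoeff = (-1) ^ #s := by
  rw [leadingCoeff_prod, prod_congr rfl fun i hi => leadingCoeff_one_sub_X_add_one_pow (he i hi),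
    prod_const]

end Polynomial

open Polynomial

theorem Td_natCast_eq_sum_coeff (n r : ℕ) (e : Fin r → ℕ) :
    Td n r (fun i => (e i : ℤ)) =
      ∑ k ∈ range (n + r + 1), (-1) ^ k * (∏ i, (1 - (X + 1) ^ e i) : ℚ[X]).coeff k := by
  simp_rw [coeff_prod_one_sub_X_add_one_pow, mul_sum]
  rw [Td, sum_comm]
  refine sum_congr rfl fun S _ => ?_
  have halt := Ring.alternating_sum_range_choose_succ ((∑ i ∈ S, e i : ℕ) - 1 : ℚ) (n + r)
  simp only [sub_add_cancel, Ring.choose_natCast] at halt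
  have hcast : -1 + ∑ i ∈ S, ((e i : ℤ) : ℚ) = ((∑ i ∈ S, e i : ℕ) : ℚ) - 1 := by
    push_cast; ring
  rw [gbc_eq_choose, hcast, pow_add, mul_right_comm, ← halt, sum_mul]
  refine sum_congr rfl fun k _ => ?_
  ring

theorem todd_zero_c1_general (n r : ℕ) (d : Fin r → ℤ) (hd : ∀ i, 1 < d i)
    (hc : (n : ℤ) + r + 1 - ∑ i, d i = 0) :
    Td n r d = 1 + (-1) ^ n := by
  obtain ⟨e, rfl⟩ : ∃ e : Fin r → ℕ, d = fun i => (e i : ℤ) :=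
    ⟨fun i => (d i).toNat, funext fun i => (Int.toNat_of_nonneg (by linarith [hd i])).symm⟩
  have he : ∀ i ∈ univ, e i ≠ 0 := fun i _ => by have : 1 < (e i : ℤ) := hd i; omega
  have hdeg : (∏ i, (1 - (X + 1) ^ e i) : ℚ[X]).natDegree = n + r + 1 := by
    rw [natDegree_prod_one_sub_X_add_one_pow he]
    zify
    simp only at hc
    linarith
  rw [Td_natCast_eq_sum_coeff, ← hdeg, sum_range_natDegree_neg_one_pow_mul_coeff,
    eval_neg_one_prod_one_sub_X_add_one_pow he, leadingCoeff_prod_one_sub_X_add_one_pow he, hdeg,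
    card_univ, Fintype.card_fin]
  have hsq : (-1 : ℚ) ^ (r + r) = 1 := Even.neg_one_pow ⟨r, rfl⟩
  linear_combination (-1 : ℚ) ^ n * hsq

theorem todd_zero_c1 (n r : ℕ) (hr : 1 ≤ r) (d : Fin r → ℤ) (hd : ∀ i, 1 < d i)
    (hc : (n : ℤ) + r + 1 - ∑ i, d i = 0) :
    Td n r d = 1 + (-1) ^ n :=
  todd_zero_c1_general n r d hd hc
end

section
/- Define χ(n; d_1,…,d_r; t) := Σ_{j=0}^{r} (-1)^{n+r+j} Σ_{1 ≤ k_1 < ⋯ < k_j ≤ r} C(t·c_1 - 1 + d_{k_1} + ⋯ + d_{k_j}, n+r), where c_1 = n + r + 1 - Σ d_i and t ∈ ℚ. Then χ(n; d; 1 - t) = (-1)^n · χ(n; d; t). -/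
open Finset

/-- Euler–Poincaré characteristic `χ(X_n(d), K^t)` of the complete intersection,
via the combinatorial formula, where `c₁ = n + r + 1 - ∑ dᵢ`. -/
def chiCI (n r : ℕ) (d : Fin r → ℤ) (t : ℚ) : ℚ :=
  ∑ S ∈ (Finset.univ : Finset (Fin r)).powerset,
    (-1) ^ (n + r + S.card) *
      gbc (t * ((n : ℚ) + r + 1 - ∑ i, (d i : ℚ)) - 1 + ∑ i ∈ S, (d i : ℚ)) (n + r)

/-!
Both sides are alternating sums over subsets `S ⊆ {1, …, r}`. Replacing `t` by `1 - t` and `S` by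
its complement turns the argument `a` of each binomial coefficient `C(a, n + r)` into
`n + r - 1 - a`, and the reflection `C(k - 1 - a, k) = (-1)^k C(a, k)` of the falling factorial
produces the sign.
-/

theorem gbc_eq_descPochhammer_eval_s11 (a : ℚ) (k : ℕ) :
    gbc a k = (descPochhammer ℚ k).eval a / k.factorial := by
  rw [gbc, descPochhammer_eval_eq_prod_range]

theorem gbc_sub_one_sub (a : ℚ) (k : ℕ) : gbc (k - 1 - a) k = (-1) ^ k * gbc a k := by
  rw [gbc_eq_descPochhammer_eval_s11, gbc_eq_descPochhammer_eval_s11,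
    descPochhammer_eval_eq_ascPochhammer, show (k : ℚ) - 1 - a - k + 1 = -a by ring,
    ascPochhammer_eval_neg_eq_descPochhammer, mul_div_assoc]

theorem neg_one_pow_card_eq_mul_card_compl {ι : Type*} [Fintype ι] [DecidableEq ι]
    (S : Finset ι) : (-1 : ℚ) ^ #S = (-1) ^ Fintype.card ι * (-1) ^ #Sᶜ := by
  rw [← card_add_card_compl S, pow_add, mul_assoc, ← pow_add, ← two_mul, pow_mul, neg_one_sq,
    one_pow, mul_one]

section SubsetAltSum

variable {ι : Type*} [Fintype ι] [DecidableEq ι]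

def subsetAltSum (w : ι → ℚ) (k : ℕ) (x : ℚ) : ℚ :=
  ∑ S : Finset ι, (-1) ^ #S * gbc (x + ∑ i ∈ S, w i) k

theorem subsetAltSum_reflect (w : ι → ℚ) (k : ℕ) (x : ℚ) :
    subsetAltSum w k (k - 1 - ∑ i, w i - x) = (-1) ^ (k + Fintype.card ι) * subsetAltSum w k x := by
  rw [subsetAltSum, subsetAltSum, mul_sum]
  refine Fintype.sum_equiv (compl_involutive.toPerm _) _ _ fun S => ?_
  have harg : (k : ℚ) - 1 - ∑ i, w i - x + ∑ i ∈ S, w i = k - 1 - (x + ∑ i ∈ Sᶜ, w i) := by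
    rw [← sum_add_sum_compl S w]; ring
  rw [harg, gbc_sub_one_sub, neg_one_pow_card_eq_mul_card_compl S, pow_add,
    Function.Involutive.coe_toPerm]
  ring

end SubsetAltSum

theorem chiCI_eq_subsetAltSum (n r : ℕ) (d : Fin r → ℤ) (t : ℚ) :
    chiCI n r d t = (-1) ^ (n + r) *
      subsetAltSum (fun i => (d i : ℚ)) (n + r) (t * ((n : ℚ) + r + 1 - ∑ i, (d i : ℚ)) - 1) := by
  rw [chiCI, subsetAltSum, powerset_univ, mul_sum]
  simp only [pow_add, mul_assoc]

theorem chi_one_sub_general (n r : ℕ) (d : Fin r → ℤ) (t : ℚ) :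
    chiCI n r d (1 - t) = (-1) ^ n * chiCI n r d t := by
  have hx : (1 - t) * ((n : ℚ) + r + 1 - ∑ i, (d i : ℚ)) - 1
      = ((n + r : ℕ) : ℚ) - 1 - ∑ i, (d i : ℚ) - (t * ((n : ℚ) + r + 1 - ∑ i, (d i : ℚ)) - 1) := by
    push_cast; ring
  rw [chiCI_eq_subsetAltSum, chiCI_eq_subsetAltSum, hx, subsetAltSum_reflect, Fintype.card_fin,
    add_assoc n r r, ← two_mul, pow_add (-1 : ℚ) n (2 * r), pow_mul, neg_one_sq, one_pow]
  ring

theorem chi_one_sub (n r : ℕ) (hr : 1 ≤ r) (d : Fin r → ℤ) (hd : ∀ i, 0 < d i) (t : ℚ) :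
    chiCI n r d (1 - t) = (-1) ^ n * chiCI n r d t :=
  chi_one_sub_general n r d t
end

section
/- Define χ(n; d_1,…,d_r; t) := Σ_{j=0}^{r} (-1)^{n+r+j} Σ_{1 ≤ k_1 < ⋯ < k_j ≤ r} C(t·c_1 - 1 + d_{k_1} + ⋯ + d_{k_j}, n+r), where c_1 = n + r + 1 - Σ d_i. If c_1 > 0, t = k/N with 0 < k < N, and t·c_1 is an integer, then χ(n; d; t) = 0. -/
open Finset

lemma gbc_natCast_eq_zero_s12 {a K : ℕ} (h : a < K) : gbc a K = 0 := by
  rw [gbc, prod_eq_zero (mem_range.2 h) (sub_self _), zero_div]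

lemma gbc_intCast_eq_zero_s12 {z : ℤ} {K : ℕ} (h0 : 0 ≤ z) (h1 : z < K) : gbc z K = 0 := by
  lift z to ℕ using h0
  exact_mod_cast gbc_natCast_eq_zero_s12 (by exact_mod_cast h1)

/-- Every argument `m - 1 + ∑_{i ∈ S} dᵢ` lies in `[0, n + r)`, where `C(·, n + r)` vanishes. -/
lemma chiCI_eq_zero_of_mul_eq_int (n r : ℕ) (d : Fin r → ℤ) (hd : ∀ i, 0 ≤ d i) (t : ℚ)
    (m : ℤ) (hm : t * ((n : ℚ) + r + 1 - ∑ i, (d i : ℚ)) = m) (hm0 : 0 < m)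
    (hmc : m < (n : ℤ) + r + 1 - ∑ i, d i) : chiCI n r d t = 0 := by
  refine sum_eq_zero fun S _ => ?_
  have hS0 : 0 ≤ ∑ i ∈ S, d i := sum_nonneg fun i _ => hd i
  have hSle : ∑ i ∈ S, d i ≤ ∑ i, d i := sum_le_univ_sum_of_nonneg hd
  have harg : t * ((n : ℚ) + r + 1 - ∑ i, (d i : ℚ)) - 1 + ∑ i ∈ S, (d i : ℚ)
      = ((m - 1 + ∑ i ∈ S, d i : ℤ) : ℚ) := by
    rw [hm]; push_cast; ring
  rw [harg, gbc_intCast_eq_zero_s12 (by omega) (by push_cast; omega), mul_zero]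

lemma pos_and_lt_of_mul_eq_mul {k N c m : ℤ} (hk : 0 < k) (hkN : k < N) (hc : 0 < c)
    (h : k * c = m * N) : 0 < m ∧ m < c := by
  constructor <;> nlinarith

theorem chi_pos_c1_general (n r N k : ℕ) (d : Fin r → ℤ) (hd : ∀ i, 1 < d i)
    (hc : 0 < (n : ℤ) + r + 1 - ∑ i, d i) (hk : 0 < k) (hkN : k < N)
    (hint : ∃ m : ℤ, (k : ℚ) / N * ((n : ℚ) + r + 1 - ∑ i, (d i : ℚ)) = m) :
    chiCI n r d ((k : ℚ) / N) = 0 := by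
  obtain ⟨m, hm⟩ := hint
  have hN : (N : ℚ) ≠ 0 := Nat.cast_ne_zero.2 (by omega)
  have hkc : (k : ℤ) * ((n : ℤ) + r + 1 - ∑ i, d i) = m * N := by
    have : (k : ℚ) * ((n : ℚ) + r + 1 - ∑ i, (d i : ℚ)) = m * N := by
      rw [← hm]; field_simp
    exact_mod_cast this
  obtain ⟨hm0, hmc⟩ := pos_and_lt_of_mul_eq_mul (by omega) (by omega) hc hkc
  exact chiCI_eq_zero_of_mul_eq_int n r d (fun i => (hd i).le.trans' zero_le_one) _ m hm hm0 hmc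

theorem chi_pos_c1 (n r N k : ℕ) (hr : 1 ≤ r) (d : Fin r → ℤ) (hd : ∀ i, 1 < d i)
    (hc : 0 < (n : ℤ) + r + 1 - ∑ i, d i) (hk : 0 < k) (hkN : k < N)
    (hint : ∃ m : ℤ, (k : ℚ) / N * ((n : ℚ) + r + 1 - ∑ i, (d i : ℚ)) = m) :
    chiCI n r d ((k : ℚ) / N) = 0 :=
  chi_pos_c1_general n r N k d hd hc hk hkN hint
end

section
/- Let f(x) = e^{tx}(1 - e^{-x}) as a formal power series in x over ℚ (with t a rational parameter). Then for formal variables u_1, u_2, u_3, w: f(u_1)f(u_2)f(u_3) - f(u_1+w)f(u_2-w)f(u_3) = f(u_1)f(w)f(u_2-w+u_3) - f(w)f(u_2-w)f(u_1+u_3). -/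
/-!
Write `f x = ψ x * (1 - χ x)` with the additive characters `ψ x = exp (t x)` and
`χ x = exp (-x)`. In each of the four products the arguments sum to `u₁ + u₂ + u₃`, so the
`ψ`-factors combine to the common factor `ψ (u₁ + u₂ + u₃)`. What remains is the case `ψ = 1`,
which in terms of `a = χ u₁`, `b = χ u₂`, `c = χ u₃`, `y = χ w`, `z = χ (-w)` is a polynomial
identity modulo `y * z = 1`.
-/

namespace AddChar

variable {G R : Type*} [AddCommGroup G] [CommRing R]

theorem map_mul_map_neg (χ : AddChar G R) (x : G) : χ x * χ (-x) = 1 := by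
  rw [← map_add_eq_mul, add_neg_cancel, map_zero_eq_one]

theorem one_sub_three_term_identity (χ : AddChar G R) (u₁ u₂ u₃ w : G) :
    (1 - χ u₁) * (1 - χ u₂) * (1 - χ u₃) -
        (1 - χ (u₁ + w)) * (1 - χ (u₂ - w)) * (1 - χ u₃) =
      (1 - χ u₁) * (1 - χ w) * (1 - χ (u₂ - w + u₃)) -
        (1 - χ w) * (1 - χ (u₂ - w)) * (1 - χ (u₁ + u₃)) := by
  simp only [sub_eq_add_neg, map_add_eq_mul]
  linear_combination (1 - χ u₁) * χ u₂ * (1 - χ u₃) * χ.map_mul_map_neg w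

theorem mul_one_sub_mul_three (ψ χ : AddChar G R) (a b c : G) :
    ψ a * (1 - χ a) * (ψ b * (1 - χ b)) * (ψ c * (1 - χ c)) =
      ψ (a + b + c) * ((1 - χ a) * (1 - χ b) * (1 - χ c)) := by
  rw [map_add_eq_mul, map_add_eq_mul]
  ring

theorem mul_one_sub_three_term_identity (ψ χ : AddChar G R) (u₁ u₂ u₃ w : G) :
    let f : G → R := fun x => ψ x * (1 - χ x)
    f u₁ * f u₂ * f u₃ - f (u₁ + w) * f (u₂ - w) * f u₃ =
      f u₁ * f w * f (u₂ - w + u₃) - f w * f (u₂ - w) * f (u₁ + u₃) := by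
  intro f
  simp only [f, mul_one_sub_mul_three]
  rw [show u₁ + w + (u₂ - w) + u₃ = u₁ + u₂ + u₃ by abel,
    show u₁ + w + (u₂ - w + u₃) = u₁ + u₂ + u₃ by abel,
    show w + (u₂ - w) + (u₁ + u₃) = u₁ + u₂ + u₃ by abel,
    ← mul_sub, ← mul_sub, one_sub_three_term_identity]

end AddChar

theorem f_identity (t u1 u2 u3 w : ℝ) :
    let f : ℝ → ℝ := fun x => Real.exp (t * x) * (1 - Real.exp (-x))
    f u1 * f u2 * f u3 - f (u1 + w) * f (u2 - w) * f u3 =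
      f u1 * f w * f (u2 - w + u3) - f w * f (u2 - w) * f (u1 + u3) :=
  let ψ : AddChar ℝ ℝ :=
    ⟨fun x => Real.exp (t * x), by simp, fun x y => by rw [mul_add, Real.exp_add]⟩
  let χ : AddChar ℝ ℝ :=
    ⟨fun x => Real.exp (-x), by simp, fun x y => by rw [neg_add, Real.exp_add]⟩
  AddChar.mul_one_sub_three_term_identity ψ χ u1 u2 u3 w
end
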